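/- Let (A,B) be a conic transition with ord(a) = q > p, p-rank(B) > p-rank(A), and ι(a) ∈ pB. Then ker(N : B → A) = B[p] (the kernel of the norm equals the socle of B), and p-rank(B) ≤ (p−1)·d, so the transition is terminal. -/

import Mathlib

/-!
Pick `c` with `p • c = ι a`. Since `N c - a` is killed by `p` and `ord a > p`, Nakayama's lemma
for the nilpotent ideal `(p, T)` shows that `N c` generates `A`, so `B = ℤ[T] c + ω B`. As
`p ω ℤ[T] c = ω ℤ[T] ι(a) = ι(ω A) = 0`, every element `p ω y` is `ω` of another such element,
and nilpotency of `ω` gives `p ω B = 0`: the kernel `ω B` of `N` lies in `B[p]`, and `p B = ι(A)`.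
Counting, `|ker N| = |B| / |A| = |B[p]|`, whence `ker N = B[p]` and `|ker N| = |B / p B|`.
Finally `(ω + 1)^p = 1` on `B` and `p ω B = 0` force `ω^p B = 0`; as `ω^(p-1) ≡ T^((p-1)d)`
mod `p`, the element `ω b` is killed by `T^((p-1)d)`, so `ker N = ℤ[T] ω b` has at most
`p^((p-1)d)` elements.
-/

/-- A *conic transition* `(A, B)` (Definition 2.4 of the paper): finite abelian
`p`-groups `A`, `B` which are cyclic `ℤ_p[T]`-modules (via commuting endomorphisms
`TA`, `TB` coming from the action of a cyclic `p`-group), with a surjective norm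
`N : B → A`, an injective lift `ι : A → B` satisfying `N ∘ ι = p`, a distinguished-type
polynomial `ω ≡ T^d mod p` annihilating `A` with `ι ∘ N = ν(TB)` for
`ν = ((ω+1)^p − 1)/ω = Σ_{i<p} (ω+1)^i`, kernel `ker N = ω·B`, and
`ω·x = 0 → x ∈ ι(A)`. -/
structure ConicTransition (p : ℕ) (A B : Type*) [AddCommGroup A] [AddCommGroup B] where
  hp : p.Prime
  N : B →+ A
  ι : A →+ B
  TA : AddMonoid.End A
  TB : AddMonoid.End B
  genA : A
  genB : B
  ω : Polynomial ℤ
  d : ℕ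
  hNsurj : Function.Surjective N
  hιinj : Function.Injective ι
  hNι : ∀ x : A, N (ι x) = p • x
  hcommN : ∀ x : B, N (TB x) = TA (N x)
  hcommι : ∀ x : A, ι (TA x) = TB (ι x)
  hTAnil : ∃ M : ℕ, TA ^ M = 0
  hTBnil : ∃ M : ℕ, TB ^ M = 0
  hgen : N genB = genA
  hcycA : ∀ x : A, ∃ f : Polynomial ℤ, x = Polynomial.aeval TA f genA
  hcycB : ∀ x : B, ∃ f : Polynomial ℤ, x = Polynomial.aeval TB f genB
  hωmonic : ω.Monic
  hωdeg : ω.natDegree = d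
  hdpos : 0 < d
  hωmodp : ∀ i < d, (p : ℤ) ∣ ω.coeff i
  hω0 : ω.coeff 0 = 0
  hωA : ∀ x : A, Polynomial.aeval TA ω x = 0
  hν : ∀ x : B, ι (N x) =
    Polynomial.aeval TB (∑ i ∈ Finset.range p, (ω + 1) ^ i) x
  hker : ∀ x : B, N x = 0 ↔ ∃ y : B, x = Polynomial.aeval TB ω y
  hωι : ∀ x : B, Polynomial.aeval TB ω x = 0 → ∃ a : A, x = ι a
  hpA : ∀ x : A, ∃ k : ℕ, p ^ k • x = 0
  hpB : ∀ x : B, ∃ k : ℕ, p ^ k • x = 0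

open Polynomial

namespace AddMonoid.End

variable {M : Type*} [AddCommGroup M]

@[simp] lemma add_apply (T U : AddMonoid.End M) (x : M) : (T + U) x = T x + U x := rfl

@[simp] lemma sub_apply (T U : AddMonoid.End M) (x : M) : (T - U) x = T x - U x := rfl

end AddMonoid.End

lemma AddMonoidHom.card_ker_eq_of_card_range_eq {G H K : Type*} [AddGroup G] [AddGroup H]
    [AddGroup K] [Finite G] (f : G →+ H) (g : G →+ K)
    (h : Nat.card f.range = Nat.card g.range) : Nat.card f.ker = Nat.card g.ker := by
  have : Finite f.range := Finite.of_surjective _ f.rangeRestrict_surjective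
  have hf := f.ker.card_mul_index
  have hg := g.ker.card_mul_index
  rw [AddSubgroup.index_ker] at hf
  rw [AddSubgroup.index_ker, ← h] at hg
  exact Nat.eq_of_mul_eq_mul_right Nat.card_pos (hf.trans hg.symm)

lemma AddMonoidHom.card_ker_eq_index_range {G : Type*} [AddGroup G] [Finite G] (f : G →+ G) :
    Nat.card f.ker = f.range.index := by
  have h := f.ker.card_mul_index
  rw [AddSubgroup.index_ker, ← f.range.index_mul_card] at h
  exact Nat.eq_of_mul_eq_mul_right Nat.card_pos h

section PolynomialAction

variable {M M' : Type*} [AddCommGroup M] [AddCommGroup M']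

lemma emod_zsmul_of_nsmul_eq_zero {p : ℕ} {z : M} (hz : p • z = 0) (k : ℤ) :
    (k % p) • z = k • z := by
  have hdvd : (addOrderOf z : ℤ) ∣ p :=
    Int.natCast_dvd_natCast.mpr (addOrderOf_dvd_of_nsmul_eq_zero hz)
  rw [← mod_addOrderOf_zsmul, Int.emod_emod_of_dvd _ hdvd, mod_addOrderOf_zsmul]

lemma map_aeval_apply {T : AddMonoid.End M} {T' : AddMonoid.End M'} (φ : M →+ M')
    (h : ∀ x, φ (T x) = T' (φ x)) (f : ℤ[X]) (x : M) :
    φ (aeval T f x) = aeval T' f (φ x) := by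
  induction f using Polynomial.induction_on generalizing x with
  | C a => simp [AddMonoid.End.intCast_apply]
  | add f g hf hg => simp [hf, hg]
  | monomial n a ih => simp_all [pow_succ, ← mul_assoc]

lemma aeval_mul_apply (T : AddMonoid.End M) (f g : ℤ[X]) (x : M) :
    aeval T (f * g) x = aeval T f (aeval T g x) := by
  simp

lemma aeval_apply_eq_sum_range {T : AddMonoid.End M} {y : M} {n : ℕ} (hn : (T ^ n) y = 0)
    (f : ℤ[X]) : aeval T f y = ∑ i ∈ Finset.range n, (f %ₘ X ^ n).coeff i • (T ^ i) y := by
  obtain rfl | hpos := n.eq_zero_or_pos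
  · simp_all
  have hdeg : (f %ₘ X ^ n).natDegree < n := by
    simpa using natDegree_modByMonic_lt f (monic_X_pow n)
      fun h => by simpa [hpos.ne'] using congrArg natDegree h
  conv_lhs => rw [← modByMonic_add_div f (X ^ n), mul_comm]
  rw [map_add, AddMonoid.End.add_apply, aeval_mul_apply, map_pow, aeval_X, hn, map_zero,
    add_zero, aeval_eq_sum_range' hdeg]
  exact AddMonoidHom.finsetSum_apply _ _ _

lemma card_range_aeval_apply_le {T : AddMonoid.End M} {y : M} {p n : ℕ} [NeZero p]
    (hpy : p • y = 0) (hn : (T ^ n) y = 0) :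
    Nat.card (Set.range fun f : ℤ[X] => aeval T f y) ≤ p ^ n := by
  have hpT : ∀ i : ℕ, p • (T ^ i) y = 0 := fun i => by rw [← map_nsmul, hpy, map_zero]
  calc Nat.card (Set.range fun f : ℤ[X] => aeval T f y)
      ≤ Nat.card (Set.range fun v : Fin n → ZMod p => ∑ i, (v i).val • (T ^ (i : ℕ)) y) := by
        refine Nat.card_mono (Set.finite_range _) ?_
        rintro _ ⟨f, rfl⟩
        refine ⟨fun i => (f %ₘ X ^ n).coeff i, ?_⟩
        simp only [aeval_apply_eq_sum_range hn, ← Fin.sum_univ_eq_sum_range, ← natCast_zsmul,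
          ZMod.val_intCast, emod_zsmul_of_nsmul_eq_zero (hpT _)]
    _ ≤ Nat.card (Fin n → ZMod p) := Finite.card_range_le _
    _ = p ^ n := by simp

lemma isNilpotent_aeval_of_coeff_zero_eq_zero {T : AddMonoid.End M} (hT : IsNilpotent T)
    {f : ℤ[X]} (hf : f.coeff 0 = 0) : IsNilpotent (aeval T f) := by
  rw [← X_mul_divX_add f, hf, map_zero, add_zero, map_mul]
  exact (Commute.all X f.divX |>.map (aeval T)).isNilpotent_mul_right (by rwa [aeval_X])

/-- Nakayama's lemma for the ideal `(p, X)`, which acts nilpotently on `M`. -/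
lemma exists_aeval_mul_eq_one {T : AddMonoid.End M} (hT : IsNilpotent T) {p : ℕ} (hp : p.Prime)
    (hpM : IsNilpotent (p : AddMonoid.End M)) {f : ℤ[X]} (hf : ¬ (p : ℤ) ∣ f.coeff 0) :
    ∃ h : ℤ[X], aeval T (h * f) = 1 := by
  obtain ⟨u, v, huv⟩ := ((Nat.prime_iff_prime_int.mp hp).coprime_iff_not_dvd).mpr hf
  set e := C v * f - 1
  have he : e = X * (C v * f.divX) - C (u * p) := by
    have huv' : C u * C (p : ℤ) + C v * C (f.coeff 0) = 1 := by
      rw [← C_mul, ← C_mul, ← C_add, huv, C_1]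
    rw [C_mul]
    linear_combination (-C v) * X_mul_divX_add f + huv'
  have hnil : IsNilpotent (aeval T e) := by
    rw [he, map_sub]
    refine ((Commute.all (X * (C v * f.divX)) (C (u * p))).map (aeval T)).isNilpotent_sub
      (isNilpotent_aeval_of_coeff_zero_eq_zero hT (by simp)) ?_
    rw [aeval_C, algebraMap_int_eq, eq_intCast, Int.cast_mul, Int.cast_natCast]
    exact (Int.cast_commute u _).isNilpotent_mul_left hpM
  obtain ⟨n, hn⟩ := hnil
  refine ⟨C v * ∑ i ∈ Finset.range n, (-e) ^ i, ?_⟩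
  have hgeom : C v * (∑ i ∈ Finset.range n, (-e) ^ i) * f =
      (1 - -e) * ∑ i ∈ Finset.range n, (-e) ^ i := by
    simp only [e]; ring
  rw [hgeom, mul_neg_geom_sum, map_sub, map_one, map_pow, map_neg, neg_pow, hn, mul_zero,
    sub_zero]

lemma subset_zero_of_subset_image {φ : AddMonoid.End M} (hφ : IsNilpotent φ) {S : Set M}
    (hS : S ⊆ φ '' S) : S ⊆ {0} := by
  obtain ⟨n, hn⟩ := hφ
  have key : ∀ k : ℕ, S ⊆ ⇑(φ ^ k) '' S := by
    intro k
    induction k with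
    | zero => simp
    | succ k ih =>
      rw [pow_succ, AddMonoid.End.coe_mul, Set.image_comp]
      exact ih.trans (Set.image_mono hS)
  intro x hx
  obtain ⟨y, -, rfl⟩ := key n hx
  simp [hn]

end PolynomialAction

namespace ConicTransition

variable {p : ℕ} {A B : Type*} [AddCommGroup A] [AddCommGroup B]

lemma isNilpotent_natCast_endA (ct : ConicTransition p A B) :
    IsNilpotent (p : AddMonoid.End A) := by
  obtain ⟨k, hk⟩ := ct.hpA ct.genA
  refine ⟨k, AddMonoidHom.ext fun x => ?_⟩
  obtain ⟨f, rfl⟩ := ct.hcycA x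
  rw [← Nat.cast_pow]
  exact (AddMonoid.End.natCast_apply _ _).trans (by rw [← map_nsmul, hk, map_zero]; rfl)

variable (ct : ConicTransition p A B)

lemma N_aeval_apply (f : ℤ[X]) (x : B) : ct.N (aeval ct.TB f x) = aeval ct.TA f (ct.N x) :=
  map_aeval_apply ct.N ct.hcommN f x

lemma ι_aeval_apply (f : ℤ[X]) (x : A) : ct.ι (aeval ct.TA f x) = aeval ct.TB f (ct.ι x) :=
  map_aeval_apply ct.ι ct.hcommι f x

lemma exists_ω_eq : ∃ g : ℤ[X], ct.ω = X ^ ct.d + (p : ℤ[X]) * g := by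
  obtain ⟨g, hg⟩ := (C_dvd_iff_dvd_coeff (p : ℤ) (ct.ω - X ^ ct.d)).mpr fun i => by
    rcases lt_trichotomy i ct.d with hi | rfl | hi
    · simpa [coeff_X_pow, hi.ne] using ct.hωmodp i hi
    · simp [coeff_X_pow, ← ct.hωdeg, ct.hωmonic.coeff_natDegree]
    · simp [coeff_X_pow, hi.ne', coeff_eq_zero_of_natDegree_lt (ct.hωdeg ▸ hi)]
  exact ⟨g, by rw [← map_natCast C, ← hg]; ring⟩

variable {ct} {c : B}

lemma exists_eq_aeval_N (hc : p • c = ct.ι ct.genA) (hq : p < addOrderOf ct.genA) (x : A) :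
    ∃ f : ℤ[X], x = aeval ct.TA f (ct.N c) := by
  have hpA := ct.isNilpotent_natCast_endA
  obtain ⟨g, hg⟩ := ct.hcycA (ct.N c - ct.genA)
  by_cases hg0 : (p : ℤ) ∣ g.coeff 0
  · have hg1 : ¬ (p : ℤ) ∣ (g + 1).coeff 0 := by
      rw [coeff_add, coeff_one_zero, dvd_add_right hg0]
      exact (Nat.prime_iff_prime_int.mp ct.hp).not_dvd_one
    obtain ⟨h, hh⟩ := exists_aeval_mul_eq_one ct.hTAnil ct.hp hpA hg1
    have hNc : ct.N c = aeval ct.TA (g + 1) ct.genA := by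
      rw [map_add, map_one, AddMonoid.End.add_apply, ← hg, AddMonoid.End.one_apply,
        sub_add_cancel]
    obtain ⟨F, rfl⟩ := ct.hcycA x
    refine ⟨F * h, ?_⟩
    rw [hNc, ← aeval_mul_apply, mul_assoc, aeval_mul_apply, hh, AddMonoid.End.one_apply]
  · -- otherwise `N c - a` would generate `A`, which it cannot as it is killed by `p`
    obtain ⟨h, hh⟩ := exists_aeval_mul_eq_one ct.hTAnil ct.hp hpA hg0
    have hpa : p • ct.genA = 0 := by
      have ha : ct.genA = aeval ct.TA h (ct.N c - ct.genA) := by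
        rw [hg, ← aeval_mul_apply, hh, AddMonoid.End.one_apply]
      rw [ha, ← map_nsmul, smul_sub, ← map_nsmul, hc, ct.hNι, sub_self, map_zero]
    exact absurd (addOrderOf_le_of_nsmul_eq_zero ct.hp.pos hpa) hq.not_ge

lemma exists_eq_aeval_add_aeval_ω (hc : p • c = ct.ι ct.genA)
    (hq : p < addOrderOf ct.genA) (x : B) :
    ∃ (f : ℤ[X]) (y : B), x = aeval ct.TB f c + aeval ct.TB ct.ω y := by
  obtain ⟨f, hf⟩ := exists_eq_aeval_N hc hq (ct.N x)
  obtain ⟨y, hy⟩ := (ct.hker (x - aeval ct.TB f c)).mp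
    (by rw [map_sub, ct.N_aeval_apply, ← hf, sub_self])
  exact ⟨f, y, by rw [← hy, add_sub_cancel]⟩

lemma nsmul_aeval_ω_eq_zero (hc : p • c = ct.ι ct.genA) (hq : p < addOrderOf ct.genA)
    (y : B) : p • aeval ct.TB ct.ω y = 0 := by
  refine subset_zero_of_subset_image (isNilpotent_aeval_of_coeff_zero_eq_zero ct.hTBnil ct.hω0)
    (S := Set.range fun y => p • aeval ct.TB ct.ω y) ?_ ⟨y, rfl⟩
  rintro _ ⟨y, rfl⟩
  obtain ⟨f, y', rfl⟩ := exists_eq_aeval_add_aeval_ω hc hq y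
  refine ⟨p • aeval ct.TB ct.ω y', ⟨y', rfl⟩, ?_⟩
  have hfc : p • aeval ct.TB ct.ω (aeval ct.TB f c) = 0 := by
    rw [← aeval_mul_apply, ← map_nsmul, hc, ← ct.ι_aeval_apply, mul_comm, aeval_mul_apply, ct.hωA,
      map_zero, map_zero]
  dsimp only
  rw [map_add, smul_add, hfc, zero_add, map_nsmul]

lemma nsmul_eq_zero_of_N_eq_zero (hc : p • c = ct.ι ct.genA) (hq : p < addOrderOf ct.genA)
    {x : B} (hx : ct.N x = 0) : p • x = 0 := by
  obtain ⟨y, rfl⟩ := (ct.hker x).mp hx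
  exact nsmul_aeval_ω_eq_zero hc hq y

lemma range_nsmul_eq_range_ι (hc : p • c = ct.ι ct.genA) (hq : p < addOrderOf ct.genA) :
    (p • AddMonoidHom.id B).range = ct.ι.range := by
  ext x
  simp only [AddMonoidHom.mem_range, AddMonoidHom.smul_apply, AddMonoidHom.id_apply]
  constructor
  · rintro ⟨y, rfl⟩
    obtain ⟨f, y', rfl⟩ := exists_eq_aeval_add_aeval_ω hc hq y
    refine ⟨aeval ct.TA f ct.genA, ?_⟩
    rw [smul_add, nsmul_aeval_ω_eq_zero hc hq, add_zero, ← map_nsmul, hc, ct.ι_aeval_apply]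
  · rintro ⟨α, rfl⟩
    obtain ⟨f, rfl⟩ := ct.hcycA α
    exact ⟨aeval ct.TB f c, by rw [ct.ι_aeval_apply, ← hc, map_nsmul]⟩

lemma ker_N_eq_ker_nsmul [Finite B] (hc : p • c = ct.ι ct.genA)
    (hq : p < addOrderOf ct.genA) : ct.N.ker = (p • AddMonoidHom.id B).ker := by
  refine AddSubgroup.eq_of_le_of_card_ge
    (fun x hx => by simpa using nsmul_eq_zero_of_N_eq_zero hc hq hx) (le_of_eq ?_)
  refine AddMonoidHom.card_ker_eq_of_card_range_eq _ _ ?_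
  rw [range_nsmul_eq_range_ι hc hq, AddMonoidHom.range_eq_top.mpr ct.hNsurj,
    AddSubgroup.card_top, Nat.card_congr (AddMonoidHom.ofInjective ct.hιinj).toEquiv]

lemma aeval_ω_pow_apply_eq_zero (hc : p • c = ct.ι ct.genA) (hq : p < addOrderOf ct.genA)
    (x : B) : aeval ct.TB (ct.ω ^ p) x = 0 := by
  obtain ⟨r, hr⟩ := exists_add_pow_prime_eq ct.hp ct.ω 1
  have hν : (∑ i ∈ Finset.range p, (ct.ω + 1) ^ i) * ct.ω = (ct.ω + 1) ^ p - 1 := by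
    simpa using geom_sum_mul (ct.ω + 1) p
  have hω : ct.ω ^ p =
      (∑ i ∈ Finset.range p, (ct.ω + 1) ^ i) * ct.ω - r * ct.ω * (p : ℤ[X]) := by
    rw [hν, hr]; ring
  rw [hω, map_sub, AddMonoid.End.sub_apply, aeval_mul_apply, ← ct.hν, ct.N_aeval_apply, ct.hωA,
    map_zero, aeval_mul_apply, aeval_mul_apply, map_natCast, AddMonoid.End.natCast_apply,
    map_nsmul, nsmul_aeval_ω_eq_zero hc hq, map_zero, sub_zero]

lemma TB_pow_aeval_ω_apply_eq_zero (hc : p • c = ct.ι ct.genA) (hq : p < addOrderOf ct.genA)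
    (x : B) : (ct.TB ^ ((p - 1) * ct.d)) (aeval ct.TB ct.ω x) = 0 := by
  obtain ⟨g, hg⟩ := ct.exists_ω_eq
  obtain ⟨h, hh⟩ := sub_dvd_pow_sub_pow ct.ω (X ^ ct.d) (p - 1)
  have hX : (X : ℤ[X]) ^ ((p - 1) * ct.d) = ct.ω ^ (p - 1) - h * g * (p : ℤ[X]) := by
    rw [mul_comm, pow_mul, eq_sub_iff_add_eq, ← eq_sub_iff_add_eq', hh, hg]
    ring
  rw [← aeval_X_pow (R := ℤ), hX, map_sub, AddMonoid.End.sub_apply,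
    ← aeval_mul_apply, ← pow_succ, Nat.sub_add_cancel ct.hp.one_le,
    aeval_ω_pow_apply_eq_zero hc hq, aeval_mul_apply, map_natCast, AddMonoid.End.natCast_apply,
    nsmul_aeval_ω_eq_zero hc hq, map_zero, sub_zero]

lemma card_ker_N_le [Finite B] (hc : p • c = ct.ι ct.genA) (hq : p < addOrderOf ct.genA) :
    Nat.card ct.N.ker ≤ p ^ ((p - 1) * ct.d) := by
  have : NeZero p := ⟨ct.hp.ne_zero⟩
  have hker : (ct.N.ker : Set B) ⊆
      Set.range fun f : ℤ[X] => aeval ct.TB f (aeval ct.TB ct.ω ct.genB) := by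
    intro x hx
    obtain ⟨y, rfl⟩ := (ct.hker x).mp hx
    obtain ⟨f, rfl⟩ := ct.hcycB y
    exact ⟨f, by rw [← aeval_mul_apply, mul_comm, aeval_mul_apply]⟩
  exact (Nat.card_mono (Set.toFinite _) hker).trans
    (card_range_aeval_apply_le (nsmul_aeval_ω_eq_zero hc hq _)
      (TB_pow_aeval_ω_apply_eq_zero hc hq _))

end ConicTransition

theorem stmt_17_general (p : ℕ) (A B : Type*) [AddCommGroup A] [AddCommGroup B]
    [Fintype B] (ct : ConicTransition p A B)
    (hq : p < addOrderOf ct.genA)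
    (rB : ℕ)
    (hrB : Nat.card (B ⧸ (p • AddMonoidHom.id B).range) = p ^ rB)
    (hιa : ct.ι ct.genA ∈ (p • AddMonoidHom.id B).range) :
    (∀ x : B, ct.N x = 0 ↔ p • x = 0) ∧ rB ≤ (p - 1) * ct.d := by
  obtain ⟨c, hc⟩ := hιa
  replace hc : p • c = ct.ι ct.genA := by simpa using hc
  have hker := ConicTransition.ker_N_eq_ker_nsmul hc hq
  refine ⟨fun x => by simpa using SetLike.ext_iff.mp hker x, ?_⟩
  have hcard : Nat.card ct.N.ker = p ^ rB := by
    rw [hker, AddMonoidHom.card_ker_eq_index_range]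
    exact hrB
  rw [← Nat.pow_le_pow_iff_right ct.hp.one_lt, ← hcard]
  exact ConicTransition.card_ker_N_le hc hq

/-- In a conic transition `(A, B)` with `ord(a) = q > p`,
`p`-rank`(B) > p`-rank`(A)` and `ι(a) ∈ pB`, the kernel of the norm equals the socle of
`B` (`ker N = B[p]`), and `p`-rank`(B) ≤ (p−1)·d`: the transition is terminal. -/
theorem stmt_17 (p : ℕ) (A B : Type*) [AddCommGroup A] [AddCommGroup B]
    [Fintype A] [Fintype B] (ct : ConicTransition p A B)
    (hq : p < addOrderOf ct.genA)
    (rA rB : ℕ)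
    (hrA : Nat.card (A ⧸ (p • AddMonoidHom.id A).range) = p ^ rA)
    (hrB : Nat.card (B ⧸ (p • AddMonoidHom.id B).range) = p ^ rB)
    (hlt : rA < rB)
    (hιa : ct.ι ct.genA ∈ (p • AddMonoidHom.id B).range) :
    (∀ x : B, ct.N x = 0 ↔ p • x = 0) ∧ rB ≤ (p - 1) * ct.d :=
  stmt_17_general p A B ct hq rB hrB hιa
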